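/- Let R be a commutative ring which is the union of a directed family {R_i} of Noetherian subrings such that R is flat as a module over each R_i. Then every finitely generated ideal of R is finitely presented as an R-module; that is, R is coherent. -/
import Mathlib

set_option maxHeartbeats 1000000
set_option synthInstance.maxHeartbeats 400000

open TensorProduct

/-- If a commutative ring `R` is the union of a directed family of Noetherian subrings over
each of which `R` is flat, then `R` is coherent: every finitely generated ideal of `R` is
finitely presented as an `R`-module. -/
theorem coherent_of_directed_union_noetherian (R : Type*) [CommRing R]
    (ι : Type*) (S : ι → Subring R)
    (hdir : Directed (· ≤ ·) S)
    (hnoeth : ∀ i, IsNoetherianRing (S i))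
    (hflat : ∀ i, Module.Flat (S i) R)
    (hunion : ∀ x : R, ∃ i, x ∈ S i) :
    ∀ I : Ideal R, I.FG → Module.FinitePresentation R I := by
  classical
  intro I hI
  obtain ⟨s, hs⟩ := hI
  have hne : Nonempty ι := ⟨(hunion 0).choose⟩
  choose idx hidx using hunion
  obtain ⟨i, hi⟩ := hdir.finset_le (s.image idx)
  have hsub : ∀ x ∈ s, x ∈ S i := fun x hx =>
    hi (idx x) (Finset.mem_image_of_mem idx hx) (hidx x)
  haveI := hnoeth i
  haveI := hflat i
  set A := S i
  set J : Ideal A := I.comap (algebraMap A R) with hJ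
  haveI : Module.Finite A J := Module.Finite.iff_fg.mpr (IsNoetherian.noetherian J)
  haveI : Module.FinitePresentation A J := Module.finitePresentation_of_finite A J
  -- the A-linear map from J to I
  let f : J →ₗ[A] I :=
    { toFun := fun x => ⟨algebraMap A R x.1, x.2⟩
      map_add' := by intro x y; ext; simp
      map_smul' := by intro a x; ext; simp [Algebra.smul_def] }
  let e : R ⊗[A] J →ₗ[R] I := f.liftBaseChange R
  have hcomp : ((I.subtype.restrictScalars A) ∘ₗ (e.restrictScalars A)) =
      (TensorProduct.rid A R).toLinearMap ∘ₗ (LinearMap.lTensor R J.subtype) := by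
    ext x
    simp [e, f, Algebra.smul_def, mul_comm]
  have hinj : Function.Injective e := by
    have h1 : Function.Injective (LinearMap.lTensor R J.subtype) :=
      Module.Flat.lTensor_preserves_injective_linearMap _ J.injective_subtype
    have h2 : Function.Injective ((I.subtype.restrictScalars A) ∘ₗ (e.restrictScalars A)) := by
      rw [hcomp]
      exact (TensorProduct.rid A R).injective.comp h1
    intro x y hxy
    exact h2 (by simp [LinearMap.comp_apply, hxy])
  have hsurj : Function.Surjective e := by
    rw [← LinearMap.range_eq_top]
    have hmap : Submodule.map I.subtype (LinearMap.range e) = I := by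
      apply le_antisymm
      · rintro x ⟨y, -, rfl⟩; exact y.2
      · conv_lhs => rw [← hs]
        rw [Ideal.span_le]
        intro x hx
        have hxI : x ∈ I := hs ▸ Ideal.subset_span hx
        have hxJ : (⟨x, hsub x hx⟩ : A) ∈ J := hxI
        refine Submodule.mem_map.mpr ⟨e ((1:R) ⊗ₜ[A] ⟨⟨x, hsub x hx⟩, hxJ⟩), ⟨_, rfl⟩, ?_⟩
        simp only [e, LinearMap.liftBaseChange_tmul, one_smul]; rfl
    apply Submodule.map_injective_of_injective I.injective_subtype
    rw [hmap, Submodule.map_subtype_top]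
  have hker : (LinearMap.ker e).FG := by
    rw [LinearMap.ker_eq_bot.mpr hinj]; exact Submodule.fg_bot
  exact Module.finitePresentation_of_surjective e hsurj hker
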